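/- arXiv:2407.16683 — 2 statements merged into one kernel-verified Lean document; each statement's English description precedes it below -/
import Mathlib

section
/- Let V be a finite Gödel set. Then the quantifier-shift schemas (B ⊃ ∃x A(x)) ⊃ ∃x(B ⊃ A(x)) and (∀x A(x) ⊃ B) ⊃ ∃x(A(x) ⊃ B) (x not free in B), as well as all remaining classical quantifier-shift schemas, are valid in G_V, and consequently every L-sentence has a logically equivalent prenex L-sentence in G_V. -/
/-!
Over a finite Gödel set `V` every Δ-free formula takes its values in `V`: `V` contains `0` and `1`,
is closed under `min`, `max` and Gödel implication, and infima and suprema of its subsets are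
attained. So quantifiers are evaluated as attained minima and maxima, and these commute with every
truth function that is monotone on `[0, 1]`, while an antitone one exchanges them. Each quantifier
shift is such a commutation, since `∧`, `∨` and `⊃` are monotone in their second argument, `∧` and
`∨` in their first and `⊃` antitone in its first; prenexing a formula is iterated shifting.
-/
namespace GodelPaper

/-- A first-order language: function and relation symbols of each arity. -/
structure Lang where
  Func : ℕ → Type
  Rel : ℕ → Type

/-- A Gödel set: a closed subset of [0,1] containing 0 and 1. -/
def GodelSet (V : Set ℝ) : Prop :=
  IsClosed V ∧ V ⊆ Set.Icc 0 1 ∧ (0:ℝ) ∈ V ∧ (1:ℝ) ∈ V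

/-- Terms with variables from `α`. -/
inductive Term (L : Lang) (α : Type) : Type
  | var : α → Term L α
  | func : ∀ {k}, L.Func k → (Fin k → Term L α) → Term L α

/-- A `V`-interpretation: nonempty domain, interpretation of function symbols,
and truth values in `V` for atomic sentences with parameters. -/
structure Interp (L : Lang) (V : Set ℝ) where
  Dom : Type
  dom_nonempty : Nonempty Dom
  funMap : ∀ {k}, L.Func k → (Fin k → Dom) → Dom
  relVal : ∀ {k}, L.Rel k → (Fin k → Dom) → ℝ
  relVal_mem : ∀ {k} (R : L.Rel k) (v : Fin k → Dom), relVal R v ∈ V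

def Term.eval {L : Lang} {V : Set ℝ} (I : Interp L V) {α : Type} (v : α → I.Dom) :
    Term L α → I.Dom
  | .var i => v i
  | .func f ts => I.funMap f fun j => Term.eval I v (ts j)

/-- Formulas of the Δ-extended language, with free variables among `Fin n`.
The quantifiers bind the *last* variable. Δ-free formulas (i.e. formulas of the
plain language) are singled out by the predicate `DeltaFree` below. -/
inductive Form (L : Lang) : ℕ → Type
  | falsum : ∀ {n}, Form L n
  | atom : ∀ {n k}, L.Rel k → (Fin k → Term L (Fin n)) → Form L n
  | conj : ∀ {n}, Form L n → Form L n → Form L n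
  | disj : ∀ {n}, Form L n → Form L n → Form L n
  | impl : ∀ {n}, Form L n → Form L n → Form L n
  | delta : ∀ {n}, Form L n → Form L n
  | all : ∀ {n}, Form L (n+1) → Form L n
  | ex : ∀ {n}, Form L (n+1) → Form L n

/-- The Gödel truth value of a formula under an interpretation and an
assignment of the free variables. -/
noncomputable def Form.val {L : Lang} {V : Set ℝ} (I : Interp L V) :
    ∀ {n}, Form L n → (Fin n → I.Dom) → ℝ
  | _, .falsum, _ => 0
  | _, .atom R ts, ρ => I.relVal R fun j => Term.eval I ρ (ts j)
  | _, .conj A B, ρ => min (Form.val I A ρ) (Form.val I B ρ)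
  | _, .disj A B, ρ => max (Form.val I A ρ) (Form.val I B ρ)
  | _, .impl A B, ρ => if Form.val I A ρ ≤ Form.val I B ρ then 1 else Form.val I B ρ
  | _, .delta A, ρ => if Form.val I A ρ = 1 then 1 else 0
  | _, .all A, ρ => sInf {v : ℝ | ∃ d : I.Dom, v = Form.val I A (Fin.snoc ρ d)}
  | _, .ex A, ρ => sSup {v : ℝ | ∃ d : I.Dom, v = Form.val I A (Fin.snoc ρ d)}

/-- The value of a sentence. -/
noncomputable def Form.sval {L : Lang} {V : Set ℝ} (I : Interp L V) (A : Form L 0) : ℝ :=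
  Form.val I A Fin.elim0

/-- `A` is valid in `G_V`. -/
def Valid {L : Lang} (V : Set ℝ) (A : Form L 0) : Prop :=
  ∀ I : Interp L V, Form.sval I A = 1

/-- `A` is 1-satisfiable in `G_V`. -/
def OneSat {L : Lang} (V : Set ℝ) (A : Form L 0) : Prop :=
  ∃ I : Interp L V, Form.sval I A = 1

/-- `A` is classically satisfiable: it takes value 1 under a `V`-interpretation
assigning only values in {0,1} to atomic sentences. -/
def ClassSat {L : Lang} (V : Set ℝ) (A : Form L 0) : Prop :=
  ∃ I : Interp L V,
    (∀ {k : ℕ} (R : L.Rel k) (v : Fin k → I.Dom), I.relVal R v = 0 ∨ I.relVal R v = 1) ∧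
    Form.sval I A = 1

/-- ¬A abbreviates A ⊃ ⊥. -/
def Form.not {L : Lang} {n : ℕ} (A : Form L n) : Form L n := Form.impl A Form.falsum

/-- A ↔ B abbreviates (A ⊃ B) ∧ (B ⊃ A). -/
def Form.iff {L : Lang} {n : ℕ} (A B : Form L n) : Form L n :=
  Form.conj (Form.impl A B) (Form.impl B A)

/-- Formulas of the plain language (no Δ). -/
def DeltaFree {L : Lang} : ∀ {n}, Form L n → Prop
  | _, .falsum => True
  | _, .atom _ _ => True
  | _, .conj A B => DeltaFree A ∧ DeltaFree B
  | _, .disj A B => DeltaFree A ∧ DeltaFree B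
  | _, .impl A B => DeltaFree A ∧ DeltaFree B
  | _, .delta _ => False
  | _, .all A => DeltaFree A
  | _, .ex A => DeltaFree A

/-- Quantifier-free formulas. -/
def QuantFree {L : Lang} : ∀ {n}, Form L n → Prop
  | _, .falsum => True
  | _, .atom _ _ => True
  | _, .conj A B => QuantFree A ∧ QuantFree B
  | _, .disj A B => QuantFree A ∧ QuantFree B
  | _, .impl A B => QuantFree A ∧ QuantFree B
  | _, .delta A => QuantFree A
  | _, .all _ => False
  | _, .ex _ => False

/-- Formulas containing no universal quantifier. -/
def AllFree {L : Lang} : ∀ {n}, Form L n → Prop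
  | _, .falsum => True
  | _, .atom _ _ => True
  | _, .conj A B => AllFree A ∧ AllFree B
  | _, .disj A B => AllFree A ∧ AllFree B
  | _, .impl A B => AllFree A ∧ AllFree B
  | _, .delta A => AllFree A
  | _, .all _ => False
  | _, .ex A => AllFree A

/-- Prenex formulas: a block of quantifiers followed by a quantifier-free matrix. -/
inductive IsPrenex {L : Lang} : ∀ {n}, Form L n → Prop
  | qf {n} {A : Form L n} : QuantFree A → IsPrenex A
  | all {n} {A : Form L (n+1)} : IsPrenex A → IsPrenex (Form.all A)
  | ex {n} {A : Form L (n+1)} : IsPrenex A → IsPrenex (Form.ex A)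

/-- Purely existential prenex formulas. -/
inductive ExPrenex {L : Lang} : ∀ {n}, Form L n → Prop
  | qf {n} {A : Form L n} : QuantFree A → ExPrenex A
  | ex {n} {A : Form L (n+1)} : ExPrenex A → ExPrenex (Form.ex A)

/-- The glued interpretation `I_ω`: atoms with value ≤ ω keep their value,
all other atoms get value 1. Same domain and function interpretations. -/
noncomputable def Interp.glue {L : Lang} {V : Set ℝ} (I : Interp L V) (ω : ℝ)
    (h1 : (1:ℝ) ∈ V) : Interp L V where
  Dom := I.Dom
  dom_nonempty := I.dom_nonempty
  funMap := fun {k} f v => I.funMap f v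
  relVal := fun {k} R v => if I.relVal R v ≤ ω then I.relVal R v else 1
  relVal_mem := fun {k} R v => by
    by_cases h : I.relVal R v ≤ ω
    · simpa [h] using I.relVal_mem R v
    · simpa [h] using h1

/-- The Gödel set `V_↑ = {1 - 1/k : k ≥ 1} ∪ {1}`. -/
def Vup : Set ℝ := {x : ℝ | ∃ k : ℕ, 1 ≤ k ∧ x = 1 - 1/(k:ℝ)} ∪ {1}

/-- The `m`-element Gödel set `V_m = {1 - 1/k : 1 ≤ k ≤ m-1} ∪ {1}`. -/
def Vfin (m : ℕ) : Set ℝ :=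
  {x : ℝ | ∃ k : ℕ, 1 ≤ k ∧ k ≤ m - 1 ∧ x = 1 - 1/(k:ℝ)} ∪ {1}

/-- Atomic formula built from a unary predicate. -/
def atom1 {L : Lang} (P : L.Rel 1) {n : ℕ} (t : Term L (Fin n)) : Form L n :=
  Form.atom P fun _ => t

/-- Atomic formula built from a 0-ary predicate (propositional atom). -/
def atom0 {L : Lang} (X : L.Rel 0) {n : ℕ} : Form L n :=
  Form.atom X fun i => i.elim0

def Term.rename {L : Lang} {α β : Type} (f : α → β) : Term L α → Term L β
  | .var i => .var (f i)
  | .func g ts => .func g fun j => Term.rename f (ts j)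

def Form.rename {L : Lang} : ∀ {m n}, (Fin m → Fin n) → Form L m → Form L n
  | _, _, _, .falsum => .falsum
  | _, _, f, .atom R ts => .atom R fun j => (ts j).rename f
  | _, _, f, .conj A B => .conj (A.rename f) (B.rename f)
  | _, _, f, .disj A B => .disj (A.rename f) (B.rename f)
  | _, _, f, .impl A B => .impl (A.rename f) (B.rename f)
  | _, _, f, .delta A => .delta (A.rename f)
  | _, _, f, .all A =>
      .all (A.rename (Fin.lastCases (Fin.last _) fun i => Fin.castSucc (f i)))
  | _, _, f, .ex A =>
      .ex (A.rename (Fin.lastCases (Fin.last _) fun i => Fin.castSucc (f i)))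

/-- Weakening: regard a formula with `n` free variables as one with `n+1`
free variables (not using the new last variable). -/
def Form.lift {L : Lang} {n : ℕ} (A : Form L n) : Form L (n+1) :=
  A.rename Fin.castSucc

def Term.subst {L : Lang} {α β : Type} (σ : α → Term L β) : Term L α → Term L β
  | .var i => σ i
  | .func g ts => .func g fun j => Term.subst σ (ts j)

def Form.subst {L : Lang} : ∀ {m n}, (Fin m → Term L (Fin n)) → Form L m → Form L n
  | _, _, _, .falsum => .falsum
  | _, _, σ, .atom R ts => .atom R fun j => (ts j).subst σ
  | _, _, σ, .conj A B => .conj (A.subst σ) (B.subst σ)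
  | _, _, σ, .disj A B => .disj (A.subst σ) (B.subst σ)
  | _, _, σ, .impl A B => .impl (A.subst σ) (B.subst σ)
  | _, _, σ, .delta A => .delta (A.subst σ)
  | _, _, σ, .all A =>
      .all (A.subst (Fin.lastCases (.var (Fin.last _))
        fun i => (σ i).rename Fin.castSucc))
  | _, _, σ, .ex A =>
      .ex (A.subst (Fin.lastCases (.var (Fin.last _))
        fun i => (σ i).rename Fin.castSucc))

/-- The language `L ∪ {f}` with one new function symbol of arity `a`. -/
def Lang.addFunc (L : Lang) (a : ℕ) : Lang where
  Func := fun k => L.Func k ⊕ PLift (k = a)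
  Rel := L.Rel

/-- The new function symbol of `L.addFunc a`. -/
def newFunc (L : Lang) (a : ℕ) : (L.addFunc a).Func a := Sum.inr ⟨rfl⟩

def Term.emb {L : Lang} {a : ℕ} {α : Type} : Term L α → Term (L.addFunc a) α
  | .var i => .var i
  | .func g ts => .func (Sum.inl g) fun j => Term.emb (ts j)

/-- Embedding of `L`-formulas into the language with the extra function symbol. -/
def Form.emb {L : Lang} {a : ℕ} : ∀ {n}, Form L n → Form (L.addFunc a) n
  | _, .falsum => .falsum
  | _, .atom R ts => .atom R fun j => (ts j).emb
  | _, .conj A B => .conj A.emb B.emb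
  | _, .disj A B => .disj A.emb B.emb
  | _, .impl A B => .impl A.emb B.emb
  | _, .delta A => .delta A.emb
  | _, .all A => .all A.emb
  | _, .ex A => .ex A.emb

/-- Prefix of `n` existential quantifiers (outermost quantifier binds variable 0). -/
def Form.exN {L : Lang} : ∀ n, Form L n → Form L 0
  | 0, A => A
  | n+1, A => Form.exN n (Form.ex A)

/-- Prefix of `n` universal quantifiers (outermost quantifier binds variable 0). -/
def Form.allN {L : Lang} : ∀ n, Form L n → Form L 0
  | 0, A => A
  | n+1, A => Form.allN n (Form.all A)

end GodelPaper

theorem MonotoneOn.csInf_image_of_finite {α β : Type*} [ConditionallyCompleteLinearOrder α]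
    [ConditionallyCompleteLattice β] {g : α → β} {s : Set α} (hg : MonotoneOn g s)
    (hne : s.Nonempty) (hfin : s.Finite) : sInf (g '' s) = g (sInf s) :=
  (hg.map_isLeast ⟨hne.csInf_mem hfin, fun _ h => csInf_le hfin.bddBelow h⟩).csInf_eq

theorem MonotoneOn.csSup_image_of_finite {α β : Type*} [ConditionallyCompleteLinearOrder α]
    [ConditionallyCompleteLattice β] {g : α → β} {s : Set α} (hg : MonotoneOn g s)
    (hne : s.Nonempty) (hfin : s.Finite) : sSup (g '' s) = g (sSup s) :=
  (hg.map_isGreatest ⟨hne.csSup_mem hfin, fun _ h => le_csSup hfin.bddAbove h⟩).csSup_eq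

theorem AntitoneOn.csInf_image_of_finite {α β : Type*} [ConditionallyCompleteLinearOrder α]
    [ConditionallyCompleteLattice β] {g : α → β} {s : Set α} (hg : AntitoneOn g s)
    (hne : s.Nonempty) (hfin : s.Finite) : sInf (g '' s) = g (sSup s) :=
  (hg.map_isGreatest ⟨hne.csSup_mem hfin, fun _ h => le_csSup hfin.bddAbove h⟩).csInf_eq

theorem AntitoneOn.csSup_image_of_finite {α β : Type*} [ConditionallyCompleteLinearOrder α]
    [ConditionallyCompleteLattice β] {g : α → β} {s : Set α} (hg : AntitoneOn g s)
    (hne : s.Nonempty) (hfin : s.Finite) : sSup (g '' s) = g (sInf s) :=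
  (hg.map_isLeast ⟨hne.csInf_mem hfin, fun _ h => csInf_le hfin.bddBelow h⟩).csSup_eq

namespace GodelPaper

noncomputable def godelImp (a b : ℝ) : ℝ := if a ≤ b then 1 else b

theorem godelImp_antitone_left {b : ℝ} (hb : b ≤ 1) : Antitone fun a => godelImp a b := by
  intro a a' h
  show godelImp a' b ≤ godelImp a b
  unfold godelImp
  split_ifs <;> linarith

theorem godelImp_monotoneOn_right (a : ℝ) : MonotoneOn (godelImp a) (Set.Iic 1) := by
  intro b hb b' hb' h
  unfold godelImp
  split_ifs <;> linarith [Set.mem_Iic.mp hb]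

section Semantics

variable {L : Lang} {V : Set ℝ}

theorem Term.eval_rename {α β : Type} (I : Interp L V) (f : α → β) (v : β → I.Dom) :
    ∀ t : Term L α, Term.eval I v (t.rename f) = Term.eval I (v ∘ f) t
  | .var _ => rfl
  | .func g ts => by
      simp only [Term.rename, Term.eval]
      congr 1
      funext j
      exact Term.eval_rename I f v (ts j)

theorem snoc_comp_lastCases {m n : ℕ} {D : Type} (f : Fin m → Fin n) (ρ : Fin n → D) (d : D) :
    (Fin.snoc ρ d : Fin (n+1) → D) ∘ Fin.lastCases (Fin.last n) (fun i => (f i).castSucc) =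
      Fin.snoc (ρ ∘ f) d := by
  funext i
  induction i using Fin.lastCases <;> simp

theorem val_rename (I : Interp L V) :
    ∀ {m n : ℕ} (f : Fin m → Fin n) (A : Form L m) (ρ : Fin n → I.Dom),
      Form.val I (A.rename f) ρ = Form.val I A (ρ ∘ f)
  | _, _, _, .falsum, _ => rfl
  | _, _, f, .atom R ts, ρ => by
      simp only [Form.rename, Form.val, Term.eval_rename]
  | _, _, f, .conj A B, ρ => by
      simp only [Form.rename, Form.val, val_rename I f A ρ, val_rename I f B ρ]
  | _, _, f, .disj A B, ρ => by
      simp only [Form.rename, Form.val, val_rename I f A ρ, val_rename I f B ρ]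
  | _, _, f, .impl A B, ρ => by
      simp only [Form.rename, Form.val, val_rename I f A ρ, val_rename I f B ρ]
  | _, _, f, .delta A, ρ => by
      simp only [Form.rename, Form.val, val_rename I f A ρ]
  | _, _, f, .all A, ρ => by
      simp only [Form.rename, Form.val, val_rename I _ A, snoc_comp_lastCases]
  | _, _, f, .ex A, ρ => by
      simp only [Form.rename, Form.val, val_rename I _ A, snoc_comp_lastCases]

theorem val_lift (I : Interp L V) {n : ℕ} (A : Form L n) (ρ : Fin n → I.Dom) (d : I.Dom) :
    Form.val I A.lift (Fin.snoc ρ d) = Form.val I A ρ := by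
  rw [Form.lift, val_rename]
  congr 1
  funext i
  simp

theorem val_impl (I : Interp L V) {n : ℕ} (A B : Form L n) (ρ : Fin n → I.Dom) :
    Form.val I (.impl A B) ρ = godelImp (Form.val I A ρ) (Form.val I B ρ) := rfl

def Form.instanceVals (I : Interp L V) {n : ℕ} (A : Form L (n+1)) (ρ : Fin n → I.Dom) :
    Set ℝ :=
  {v | ∃ d, v = Form.val I A (Fin.snoc ρ d)}

theorem val_all (I : Interp L V) {n : ℕ} (A : Form L (n+1)) (ρ : Fin n → I.Dom) :
    Form.val I (.all A) ρ = sInf (A.instanceVals I ρ) := rfl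

theorem val_ex (I : Interp L V) {n : ℕ} (A : Form L (n+1)) (ρ : Fin n → I.Dom) :
    Form.val I (.ex A) ρ = sSup (A.instanceVals I ρ) := rfl

theorem Form.instanceVals_nonempty (I : Interp L V) {n : ℕ} (A : Form L (n+1))
    (ρ : Fin n → I.Dom) : (A.instanceVals I ρ).Nonempty :=
  let ⟨d⟩ := I.dom_nonempty
  ⟨_, d, rfl⟩

theorem Form.instanceVals_eq_image {I : Interp L V} {n : ℕ} {A C : Form L (n+1)}
    {ρ : Fin n → I.Dom} {g : ℝ → ℝ}
    (hC : ∀ d, Form.val I C (Fin.snoc ρ d) = g (Form.val I A (Fin.snoc ρ d))) :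
    C.instanceVals I ρ = g '' A.instanceVals I ρ := by
  ext v
  simp only [Form.instanceVals, Set.mem_image, hC]
  constructor
  · rintro ⟨d, rfl⟩
    exact ⟨_, ⟨d, rfl⟩, rfl⟩
  · rintro ⟨_, ⟨d, rfl⟩, rfl⟩
    exact ⟨d, rfl⟩

theorem val_mem_of_deltaFree (hV : GodelSet V) (hfin : V.Finite) (I : Interp L V) :
    ∀ {n : ℕ} {A : Form L n}, DeltaFree A → ∀ ρ : Fin n → I.Dom, Form.val I A ρ ∈ V
  | _, .falsum, _, _ => hV.2.2.1
  | _, .atom _ _, _, _ => I.relVal_mem _ _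
  | _, .conj A B, h, ρ => by
      simp only [Form.val]
      rcases min_choice (Form.val I A ρ) (Form.val I B ρ) with h' | h' <;> rw [h']
      exacts [val_mem_of_deltaFree hV hfin I h.1 ρ, val_mem_of_deltaFree hV hfin I h.2 ρ]
  | _, .disj A B, h, ρ => by
      simp only [Form.val]
      rcases max_choice (Form.val I A ρ) (Form.val I B ρ) with h' | h' <;> rw [h']
      exacts [val_mem_of_deltaFree hV hfin I h.1 ρ, val_mem_of_deltaFree hV hfin I h.2 ρ]
  | _, .impl A B, h, ρ => by
      simp only [Form.val]
      split_ifs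
      exacts [hV.2.2.2, val_mem_of_deltaFree hV hfin I h.2 ρ]
  | _, .delta _, h, _ => h.elim
  | _, .all A, h, ρ => by
      have hsub : A.instanceVals I ρ ⊆ V := by
        rintro _ ⟨d, rfl⟩
        exact val_mem_of_deltaFree hV hfin I (A := A) h _
      exact hsub ((A.instanceVals_nonempty I ρ).csInf_mem (hfin.subset hsub))
  | _, .ex A, h, ρ => by
      have hsub : A.instanceVals I ρ ⊆ V := by
        rintro _ ⟨d, rfl⟩
        exact val_mem_of_deltaFree hV hfin I (A := A) h _
      exact hsub ((A.instanceVals_nonempty I ρ).csSup_mem (hfin.subset hsub))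

theorem val_mem_Icc_of_deltaFree (hV : GodelSet V) (hfin : V.Finite) (I : Interp L V) {n : ℕ}
    {A : Form L n} (hA : DeltaFree A) (ρ : Fin n → I.Dom) : Form.val I A ρ ∈ Set.Icc 0 1 :=
  hV.2.1 (val_mem_of_deltaFree hV hfin I hA ρ)

theorem Form.instanceVals_subset_Icc (hV : GodelSet V) (hfin : V.Finite) (I : Interp L V)
    {n : ℕ} {A : Form L (n+1)} (hA : DeltaFree A) (ρ : Fin n → I.Dom) :
    A.instanceVals I ρ ⊆ Set.Icc 0 1 := by
  rintro _ ⟨d, rfl⟩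
  exact val_mem_Icc_of_deltaFree hV hfin I hA _

theorem Form.instanceVals_finite (hV : GodelSet V) (hfin : V.Finite) (I : Interp L V)
    {n : ℕ} {A : Form L (n+1)} (hA : DeltaFree A) (ρ : Fin n → I.Dom) :
    (A.instanceVals I ρ).Finite :=
  hfin.subset fun _ ⟨_, hv⟩ => hv ▸ val_mem_of_deltaFree hV hfin I hA _

theorem val_all_of_monotoneOn (hV : GodelSet V) (hfin : V.Finite) {I : Interp L V} {n : ℕ}
    {A C : Form L (n+1)} {ρ : Fin n → I.Dom} {g : ℝ → ℝ} (hA : DeltaFree A)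
    (hg : MonotoneOn g (Set.Icc 0 1))
    (hC : ∀ d, Form.val I C (Fin.snoc ρ d) = g (Form.val I A (Fin.snoc ρ d))) :
    Form.val I (.all C) ρ = g (Form.val I (.all A) ρ) := by
  rw [val_all, val_all, Form.instanceVals_eq_image hC]
  exact (hg.mono (A.instanceVals_subset_Icc hV hfin I hA ρ)).csInf_image_of_finite
    (A.instanceVals_nonempty I ρ) (A.instanceVals_finite hV hfin I hA ρ)

theorem val_ex_of_monotoneOn (hV : GodelSet V) (hfin : V.Finite) {I : Interp L V} {n : ℕ}
    {A C : Form L (n+1)} {ρ : Fin n → I.Dom} {g : ℝ → ℝ} (hA : DeltaFree A)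
    (hg : MonotoneOn g (Set.Icc 0 1))
    (hC : ∀ d, Form.val I C (Fin.snoc ρ d) = g (Form.val I A (Fin.snoc ρ d))) :
    Form.val I (.ex C) ρ = g (Form.val I (.ex A) ρ) := by
  rw [val_ex, val_ex, Form.instanceVals_eq_image hC]
  exact (hg.mono (A.instanceVals_subset_Icc hV hfin I hA ρ)).csSup_image_of_finite
    (A.instanceVals_nonempty I ρ) (A.instanceVals_finite hV hfin I hA ρ)

theorem val_all_of_antitoneOn (hV : GodelSet V) (hfin : V.Finite) {I : Interp L V} {n : ℕ}
    {A C : Form L (n+1)} {ρ : Fin n → I.Dom} {g : ℝ → ℝ} (hA : DeltaFree A)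
    (hg : AntitoneOn g (Set.Icc 0 1))
    (hC : ∀ d, Form.val I C (Fin.snoc ρ d) = g (Form.val I A (Fin.snoc ρ d))) :
    Form.val I (.all C) ρ = g (Form.val I (.ex A) ρ) := by
  rw [val_all, val_ex, Form.instanceVals_eq_image hC]
  exact (hg.mono (A.instanceVals_subset_Icc hV hfin I hA ρ)).csInf_image_of_finite
    (A.instanceVals_nonempty I ρ) (A.instanceVals_finite hV hfin I hA ρ)

theorem val_ex_of_antitoneOn (hV : GodelSet V) (hfin : V.Finite) {I : Interp L V} {n : ℕ}
    {A C : Form L (n+1)} {ρ : Fin n → I.Dom} {g : ℝ → ℝ} (hA : DeltaFree A)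
    (hg : AntitoneOn g (Set.Icc 0 1))
    (hC : ∀ d, Form.val I C (Fin.snoc ρ d) = g (Form.val I A (Fin.snoc ρ d))) :
    Form.val I (.ex C) ρ = g (Form.val I (.all A) ρ) := by
  rw [val_ex, val_all, Form.instanceVals_eq_image hC]
  exact (hg.mono (A.instanceVals_subset_Icc hV hfin I hA ρ)).csSup_image_of_finite
    (A.instanceVals_nonempty I ρ) (A.instanceVals_finite hV hfin I hA ρ)

end Semantics

section Shifts

variable {L : Lang} {V : Set ℝ} {I : Interp L V} {n : ℕ} {A : Form L (n+1)} (B : Form L n)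
  (ρ : Fin n → I.Dom)

theorem val_all_conj_lift (hV : GodelSet V) (hfin : V.Finite) (hA : DeltaFree A) :
    Form.val I (.all (.conj A B.lift)) ρ = min (Form.val I (.all A) ρ) (Form.val I B ρ) :=
  val_all_of_monotoneOn hV hfin hA (fun _ _ _ _ h => min_le_min_right _ h) fun d => by
    simp only [Form.val, val_lift]

theorem val_ex_conj_lift (hV : GodelSet V) (hfin : V.Finite) (hA : DeltaFree A) :
    Form.val I (.ex (.conj A B.lift)) ρ = min (Form.val I (.ex A) ρ) (Form.val I B ρ) :=
  val_ex_of_monotoneOn hV hfin hA (fun _ _ _ _ h => min_le_min_right _ h) fun d => by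
    simp only [Form.val, val_lift]

theorem val_all_disj_lift (hV : GodelSet V) (hfin : V.Finite) (hA : DeltaFree A) :
    Form.val I (.all (.disj A B.lift)) ρ = max (Form.val I (.all A) ρ) (Form.val I B ρ) :=
  val_all_of_monotoneOn hV hfin hA (fun _ _ _ _ h => max_le_max_right _ h) fun d => by
    simp only [Form.val, val_lift]

theorem val_ex_disj_lift (hV : GodelSet V) (hfin : V.Finite) (hA : DeltaFree A) :
    Form.val I (.ex (.disj A B.lift)) ρ = max (Form.val I (.ex A) ρ) (Form.val I B ρ) :=
  val_ex_of_monotoneOn hV hfin hA (fun _ _ _ _ h => max_le_max_right _ h) fun d => by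
    simp only [Form.val, val_lift]

theorem val_all_impl_lift (hV : GodelSet V) (hfin : V.Finite) (hA : DeltaFree A)
    (hB : DeltaFree B) :
    Form.val I (.all (.impl A B.lift)) ρ = godelImp (Form.val I (.ex A) ρ) (Form.val I B ρ) :=
  val_all_of_antitoneOn hV hfin hA
    ((godelImp_antitone_left (val_mem_Icc_of_deltaFree hV hfin I hB ρ).2).antitoneOn _) fun d => by
    rw [val_impl, val_lift]

theorem val_ex_impl_lift (hV : GodelSet V) (hfin : V.Finite) (hA : DeltaFree A)
    (hB : DeltaFree B) :
    Form.val I (.ex (.impl A B.lift)) ρ = godelImp (Form.val I (.all A) ρ) (Form.val I B ρ) :=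
  val_ex_of_antitoneOn hV hfin hA
    ((godelImp_antitone_left (val_mem_Icc_of_deltaFree hV hfin I hB ρ).2).antitoneOn _) fun d => by
    rw [val_impl, val_lift]

theorem val_all_lift_impl (hV : GodelSet V) (hfin : V.Finite) (hA : DeltaFree A) :
    Form.val I (.all (.impl B.lift A)) ρ = godelImp (Form.val I B ρ) (Form.val I (.all A) ρ) :=
  val_all_of_monotoneOn hV hfin hA
    ((godelImp_monotoneOn_right _).mono fun _ hx => hx.2) fun d => by
    rw [val_impl, val_lift]

theorem val_ex_lift_impl (hV : GodelSet V) (hfin : V.Finite) (hA : DeltaFree A) :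
    Form.val I (.ex (.impl B.lift A)) ρ = godelImp (Form.val I B ρ) (Form.val I (.ex A) ρ) :=
  val_ex_of_monotoneOn hV hfin hA
    ((godelImp_monotoneOn_right _).mono fun _ hx => hx.2) fun d => by
    rw [val_impl, val_lift]

end Shifts

section Validity

variable {L : Lang} {V : Set ℝ} {X Y : Form L 0}

theorem valid_impl_of_sval_le (h : ∀ I : Interp L V, Form.sval I X ≤ Form.sval I Y) :
    Valid V (.impl X Y) :=
  fun I => if_pos (h I)

theorem valid_iff_of_sval_eq (h : ∀ I : Interp L V, Form.sval I X = Form.sval I Y) :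
    Valid V (.iff X Y) := fun I => by
  show min (Form.sval I (.impl X Y)) (Form.sval I (.impl Y X)) = 1
  rw [valid_impl_of_sval_le (fun I => (h I).le) I, valid_impl_of_sval_le (fun I => (h I).ge) I,
    min_self]

end Validity

section Prenex

variable {L : Lang} {V : Set ℝ}

theorem QuantFree.rename : ∀ {m n : ℕ} (f : Fin m → Fin n) (A : Form L m),
    QuantFree A → QuantFree (A.rename f)
  | _, _, _, .falsum, _ | _, _, _, .atom _ _, _ => trivial
  | _, _, f, .conj A B, h | _, _, f, .disj A B, h | _, _, f, .impl A B, h =>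
      ⟨QuantFree.rename f A h.1, QuantFree.rename f B h.2⟩
  | _, _, f, .delta A, h => QuantFree.rename f A h
  | _, _, _, .all _, h | _, _, _, .ex _, h => h.elim

theorem DeltaFree.rename : ∀ {m n : ℕ} (f : Fin m → Fin n) (A : Form L m),
    DeltaFree A → DeltaFree (A.rename f)
  | _, _, _, .falsum, _ | _, _, _, .atom _ _, _ => trivial
  | _, _, f, .conj A B, h | _, _, f, .disj A B, h | _, _, f, .impl A B, h =>
      ⟨DeltaFree.rename f A h.1, DeltaFree.rename f B h.2⟩
  | _, _, _, .delta _, h => h.elim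
  | _, _, _, .all A, h | _, _, _, .ex A, h => DeltaFree.rename _ A h

theorem IsPrenex.rename {m n : ℕ} (f : Fin m → Fin n) {A : Form L m} (h : IsPrenex A) :
    IsPrenex (A.rename f) := by
  induction h generalizing n with
  | qf hq => exact .qf (QuantFree.rename f _ hq)
  | all _ ih => exact .all (ih _)
  | ex _ ih => exact .ex (ih _)

def HasPrenexForm (V : Set ℝ) {n : ℕ} (A : Form L n) : Prop :=
  ∃ P : Form L n, IsPrenex P ∧ DeltaFree P ∧
    ∀ (I : Interp L V) (ρ : Fin n → I.Dom), Form.val I A ρ = Form.val I P ρ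

theorem HasPrenexForm.of_quantFree {n : ℕ} {A : Form L n} (hq : QuantFree A)
    (hd : DeltaFree A) : HasPrenexForm V A :=
  ⟨A, .qf hq, hd, fun _ _ => rfl⟩

theorem HasPrenexForm.all {n : ℕ} {A : Form L (n+1)} (h : HasPrenexForm V A) :
    HasPrenexForm V (.all A) :=
  let ⟨P, hP, hPd, hPv⟩ := h
  ⟨.all P, .all hP, hPd, fun I ρ => by simp only [Form.val, hPv I]⟩

theorem HasPrenexForm.ex {n : ℕ} {A : Form L (n+1)} (h : HasPrenexForm V A) :
    HasPrenexForm V (.ex A) :=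
  let ⟨P, hP, hPd, hPv⟩ := h
  ⟨.ex P, .ex hP, hPd, fun I ρ => by simp only [Form.val, hPv I]⟩

/-- Connectives out of whose arguments quantifiers can be shifted; shifted out of an antitone first
argument, `∀` and `∃` trade places. -/
structure ShiftConnective (L : Lang) where
  op : ∀ {n : ℕ}, Form L n → Form L n → Form L n
  truth : ℝ → ℝ → ℝ
  val_op : ∀ {V : Set ℝ} (I : Interp L V) {n : ℕ} (A B : Form L n) (ρ : Fin n → I.Dom),
    Form.val I (op A B) ρ = truth (Form.val I A ρ) (Form.val I B ρ)
  quantFree_op : ∀ {n : ℕ} {A B : Form L n}, QuantFree A → QuantFree B → QuantFree (op A B)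
  deltaFree_op : ∀ {n : ℕ} {A B : Form L n}, DeltaFree A → DeltaFree B → DeltaFree (op A B)
  monotoneOn_right : ∀ p, MonotoneOn (truth p) (Set.Icc 0 1)
  monotoneOn_or_antitoneOn_left :
    (∀ q ∈ Set.Icc (0 : ℝ) 1, MonotoneOn (truth · q) (Set.Icc 0 1)) ∨
      ∀ q ∈ Set.Icc (0 : ℝ) 1, AntitoneOn (truth · q) (Set.Icc 0 1)

namespace ShiftConnective

variable (c : ShiftConnective L)

theorem hasPrenexForm_op_of_quantFree (hV : GodelSet V) (hfin : V.Finite) {n : ℕ}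
    {Q : Form L n} (hQ : IsPrenex Q) (hQd : DeltaFree Q) {P : Form L n} (hP : QuantFree P)
    (hPd : DeltaFree P) : HasPrenexForm V (c.op P Q) := by
  induction hQ with
  | qf hq => exact .of_quantFree (c.quantFree_op hP hq) (c.deltaFree_op hPd hQd)
  | @all m Q _ ih =>
    obtain ⟨R, hR, hRd, hRv⟩ := ih hQd (P := P.lift) (QuantFree.rename _ _ hP) (DeltaFree.rename _ _ hPd)
    refine ⟨.all R, .all hR, hRd, fun I ρ => ?_⟩
    rw [c.val_op]
    exact (val_all_of_monotoneOn hV hfin hQd (c.monotoneOn_right _) fun d => by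
      rw [← hRv, c.val_op, val_lift]).symm
  | @ex m Q _ ih =>
    obtain ⟨R, hR, hRd, hRv⟩ := ih hQd (P := P.lift) (QuantFree.rename _ _ hP) (DeltaFree.rename _ _ hPd)
    refine ⟨.ex R, .ex hR, hRd, fun I ρ => ?_⟩
    rw [c.val_op]
    exact (val_ex_of_monotoneOn hV hfin hQd (c.monotoneOn_right _) fun d => by
      rw [← hRv, c.val_op, val_lift]).symm

theorem hasPrenexForm_op_of_isPrenex (hV : GodelSet V) (hfin : V.Finite) {n : ℕ}
    {P : Form L n} (hP : IsPrenex P) (hPd : DeltaFree P) {Q : Form L n} (hQ : IsPrenex Q)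
    (hQd : DeltaFree Q) : HasPrenexForm V (c.op P Q) := by
  induction hP with
  | qf hp => exact c.hasPrenexForm_op_of_quantFree hV hfin hQ hQd hp hPd
  | @all m P _ ih =>
    obtain ⟨R, hR, hRd, hRv⟩ := ih hPd (Q := Q.lift) (hQ.rename _) (DeltaFree.rename _ _ hQd)
    have hR_pt : ∀ (I : Interp L V) ρ d, Form.val I R (Fin.snoc ρ d) =
        c.truth (Form.val I P (Fin.snoc ρ d)) (Form.val I Q ρ) := fun I ρ d => by
      rw [← hRv, c.val_op, val_lift]
    rcases c.monotoneOn_or_antitoneOn_left with hmono | hanti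
    · refine ⟨.all R, .all hR, hRd, fun I ρ => ?_⟩
      rw [c.val_op, val_all_of_monotoneOn hV hfin hPd
        (hmono _ (val_mem_Icc_of_deltaFree hV hfin I hQd ρ)) (hR_pt I ρ)]
    · refine ⟨.ex R, .ex hR, hRd, fun I ρ => ?_⟩
      rw [c.val_op, val_ex_of_antitoneOn hV hfin hPd
        (hanti _ (val_mem_Icc_of_deltaFree hV hfin I hQd ρ)) (hR_pt I ρ)]
  | @ex m P _ ih =>
    obtain ⟨R, hR, hRd, hRv⟩ := ih hPd (Q := Q.lift) (hQ.rename _) (DeltaFree.rename _ _ hQd)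
    have hR_pt : ∀ (I : Interp L V) ρ d, Form.val I R (Fin.snoc ρ d) =
        c.truth (Form.val I P (Fin.snoc ρ d)) (Form.val I Q ρ) := fun I ρ d => by
      rw [← hRv, c.val_op, val_lift]
    rcases c.monotoneOn_or_antitoneOn_left with hmono | hanti
    · refine ⟨.ex R, .ex hR, hRd, fun I ρ => ?_⟩
      rw [c.val_op, val_ex_of_monotoneOn hV hfin hPd
        (hmono _ (val_mem_Icc_of_deltaFree hV hfin I hQd ρ)) (hR_pt I ρ)]
    · refine ⟨.all R, .all hR, hRd, fun I ρ => ?_⟩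
      rw [c.val_op, val_all_of_antitoneOn hV hfin hPd
        (hanti _ (val_mem_Icc_of_deltaFree hV hfin I hQd ρ)) (hR_pt I ρ)]

theorem hasPrenexForm_op (hV : GodelSet V) (hfin : V.Finite) {n : ℕ} {A B : Form L n}
    (hA : HasPrenexForm V A) (hB : HasPrenexForm V B) : HasPrenexForm V (c.op A B) := by
  obtain ⟨P, hP, hPd, hPv⟩ := hA
  obtain ⟨Q, hQ, hQd, hQv⟩ := hB
  obtain ⟨R, hR, hRd, hRv⟩ := c.hasPrenexForm_op_of_isPrenex hV hfin hP hPd hQ hQd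
  exact ⟨R, hR, hRd, fun I ρ => by rw [c.val_op, hPv, hQv, ← c.val_op, hRv]⟩

end ShiftConnective

def conjConnective (L : Lang) : ShiftConnective L where
  op := .conj
  truth := min
  val_op _ _ _ _ _ := rfl
  quantFree_op := And.intro
  deltaFree_op := And.intro
  monotoneOn_right _ _ _ _ _ h := min_le_min_left _ h
  monotoneOn_or_antitoneOn_left := .inl fun _ _ _ _ _ _ h => min_le_min_right _ h

def disjConnective (L : Lang) : ShiftConnective L where
  op := .disj
  truth := max
  val_op _ _ _ _ _ := rfl
  quantFree_op := And.intro
  deltaFree_op := And.intro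
  monotoneOn_right _ _ _ _ _ h := max_le_max_left _ h
  monotoneOn_or_antitoneOn_left := .inl fun _ _ _ _ _ _ h => max_le_max_right _ h

noncomputable def implConnective (L : Lang) : ShiftConnective L where
  op := .impl
  truth := godelImp
  val_op _ _ _ _ _ := rfl
  quantFree_op := And.intro
  deltaFree_op := And.intro
  monotoneOn_right p := (godelImp_monotoneOn_right p).mono fun _ hx => hx.2
  monotoneOn_or_antitoneOn_left := .inr fun _ hq => (godelImp_antitone_left hq.2).antitoneOn _

theorem hasPrenexForm (hV : GodelSet V) (hfin : V.Finite) :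
    ∀ {n : ℕ} (C : Form L n), DeltaFree C → HasPrenexForm V C
  | _, .falsum, h | _, .atom _ _, h => .of_quantFree trivial h
  | _, .conj A B, h => (conjConnective L).hasPrenexForm_op hV hfin
      (hasPrenexForm hV hfin A h.1) (hasPrenexForm hV hfin B h.2)
  | _, .disj A B, h => (disjConnective L).hasPrenexForm_op hV hfin
      (hasPrenexForm hV hfin A h.1) (hasPrenexForm hV hfin B h.2)
  | _, .impl A B, h => (implConnective L).hasPrenexForm_op hV hfin
      (hasPrenexForm hV hfin A h.1) (hasPrenexForm hV hfin B h.2)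
  | _, .delta _, h => h.elim
  | _, .all A, h => (hasPrenexForm hV hfin A h).all
  | _, .ex A, h => (hasPrenexForm hV hfin A h).ex

end Prenex

/-- For a finite Gödel set `V`: the quantifier-shift schemas
`(B ⊃ ∃x A(x)) ⊃ ∃x(B ⊃ A(x))` and `(∀x A(x) ⊃ B) ⊃ ∃x(A(x) ⊃ B)` are valid in
`G_V`, as are all remaining classical quantifier-shift schemas (stated as the
eight shift equivalences), and consequently every sentence has a logically
equivalent prenex sentence in `G_V`. -/
theorem stmt_10 {L : Lang} {V : Set ℝ} (hV : GodelSet V) (hfin : V.Finite) :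
    (∀ (A : Form L 1) (B : Form L 0), DeltaFree A → DeltaFree B →
      Valid V (Form.impl (Form.impl B (Form.ex A))
        (Form.ex (Form.impl (Form.lift B) A)))) ∧
    (∀ (A : Form L 1) (B : Form L 0), DeltaFree A → DeltaFree B →
      Valid V (Form.impl (Form.impl (Form.all A) B)
        (Form.ex (Form.impl A (Form.lift B))))) ∧
    (∀ (A : Form L 1) (B : Form L 0), DeltaFree A → DeltaFree B →
      Valid V (Form.iff (Form.all (Form.conj A (Form.lift B)))
        (Form.conj (Form.all A) B)) ∧
      Valid V (Form.iff (Form.ex (Form.conj A (Form.lift B)))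
        (Form.conj (Form.ex A) B)) ∧
      Valid V (Form.iff (Form.all (Form.disj A (Form.lift B)))
        (Form.disj (Form.all A) B)) ∧
      Valid V (Form.iff (Form.ex (Form.disj A (Form.lift B)))
        (Form.disj (Form.ex A) B)) ∧
      Valid V (Form.iff (Form.all (Form.impl A (Form.lift B)))
        (Form.impl (Form.ex A) B)) ∧
      Valid V (Form.iff (Form.ex (Form.impl A (Form.lift B)))
        (Form.impl (Form.all A) B)) ∧
      Valid V (Form.iff (Form.all (Form.impl (Form.lift B) A))
        (Form.impl B (Form.all A))) ∧
      Valid V (Form.iff (Form.ex (Form.impl (Form.lift B) A))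
        (Form.impl B (Form.ex A)))) ∧
    (∀ C : Form L 0, DeltaFree C → ∃ P : Form L 0, IsPrenex P ∧ DeltaFree P ∧
      ∀ I : Interp L V, Form.sval I C = Form.sval I P) := by
  refine ⟨fun A B hA _ => valid_impl_of_sval_le fun I =>
      (val_ex_lift_impl B Fin.elim0 hV hfin hA).ge,
    fun A B hA hB => valid_impl_of_sval_le fun I =>
      (val_ex_impl_lift B Fin.elim0 hV hfin hA hB).ge,
    fun A B hA hB => ?_, fun C hC => ?_⟩
  · exact ⟨valid_iff_of_sval_eq fun I => val_all_conj_lift B Fin.elim0 hV hfin hA,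
      valid_iff_of_sval_eq fun I => val_ex_conj_lift B Fin.elim0 hV hfin hA,
      valid_iff_of_sval_eq fun I => val_all_disj_lift B Fin.elim0 hV hfin hA,
      valid_iff_of_sval_eq fun I => val_ex_disj_lift B Fin.elim0 hV hfin hA,
      valid_iff_of_sval_eq fun I => val_all_impl_lift B Fin.elim0 hV hfin hA hB,
      valid_iff_of_sval_eq fun I => val_ex_impl_lift B Fin.elim0 hV hfin hA hB,
      valid_iff_of_sval_eq fun I => val_all_lift_impl B Fin.elim0 hV hfin hA,
      valid_iff_of_sval_eq fun I => val_ex_lift_impl B Fin.elim0 hV hfin hA⟩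
  · obtain ⟨P, hP, hPd, hPv⟩ := hasPrenexForm hV hfin C hC
    exact ⟨P, hP, hPd, fun I => hPv I Fin.elim0⟩

end GodelPaper
end

section
/- Let V be a Gödel set, c ∈ (0,1], and I a V-interpretation (of the Δ-extended language) such that every atomic sentence P with parameters satisfies I(P)=0 or I(P) ≥ c. Then every sentence A with parameters satisfies I(A)=0 or I(A) ≥ c. -/
namespace GodelPaper

/-! By induction on formulas, every value lies in `{0} ∪ [c, ∞)`. This set contains 0 and 1, the
`min` and `max` of two reals is one of them, and the set is closed under `sInf` and `sSup` of
nonempty subsets: such a subset either contains 0 (resp. an element `≥ c`), or lies in `[c, ∞)`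
(resp. equals `{0}`). -/

section ZeroOrAtLeast

variable {c : ℝ} {S : Set ℝ}

theorem sSup_mem_insert_zero_Ici (hne : S.Nonempty) (hS : S ⊆ insert 0 (Set.Ici c)) :
    sSup S ∈ insert 0 (Set.Ici c) := by
  by_cases hbdd : BddAbove S
  · by_cases hbig : ∃ x ∈ S, c ≤ x
    · obtain ⟨x, hxS, hcx⟩ := hbig
      exact Or.inr (hcx.trans (le_csSup hbdd hxS))
    · push Not at hbig
      have hS0 : S = {0} := hne.subset_singleton_iff.mp fun x hx =>
        (hS hx).resolve_right (hbig x hx).not_ge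
      exact Or.inl (by rw [hS0, csSup_singleton])
  -- junk value: `sSup` of a set of reals that is not bounded above is `0`
  · exact Or.inl (Real.sSup_of_not_bddAbove hbdd)

theorem sInf_mem_insert_zero_Ici (hc : 0 ≤ c) (hne : S.Nonempty)
    (hS : S ⊆ insert 0 (Set.Ici c)) : sInf S ∈ insert 0 (Set.Ici c) := by
  have hnonneg : ∀ x ∈ S, 0 ≤ x := fun x hx => (hS hx).elim (·.ge) hc.trans
  by_cases hzero : (0 : ℝ) ∈ S
  · exact Or.inl (IsLeast.csInf_eq ⟨hzero, hnonneg⟩)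
  · exact Or.inr (le_csInf hne fun x hx => (hS hx).resolve_left (ne_of_mem_of_not_mem hx hzero))

end ZeroOrAtLeast

theorem stmt_18_general {L : Lang} {V : Set ℝ} (c : ℝ)
    (hc : c ∈ Set.Ioc (0:ℝ) 1) (I : Interp L V)
    (hatoms : ∀ {k : ℕ} (R : L.Rel k) (v : Fin k → I.Dom),
      I.relVal R v = 0 ∨ c ≤ I.relVal R v) :
    ∀ {n : ℕ} (A : Form L n) (ρ : Fin n → I.Dom),
      Form.val I A ρ = 0 ∨ c ≤ Form.val I A ρ := by
  have hzero : (0 : ℝ) ∈ insert 0 (Set.Ici c) := Or.inl rfl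
  have hone : (1 : ℝ) ∈ insert 0 (Set.Ici c) := Or.inr hc.2
  obtain ⟨d⟩ := I.dom_nonempty
  intro n A
  induction A with
  | falsum => exact fun _ => hzero
  | atom R ts => exact fun _ => hatoms R _
  | conj A B ihA ihB =>
      intro ρ
      show min _ _ ∈ insert 0 (Set.Ici c)
      rcases min_choice (A.val I ρ) (B.val I ρ) with h | h <;> rw [h]
      exacts [ihA ρ, ihB ρ]
  | disj A B ihA ihB =>
      intro ρ
      show max _ _ ∈ insert 0 (Set.Ici c)
      rcases max_choice (A.val I ρ) (B.val I ρ) with h | h <;> rw [h]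
      exacts [ihA ρ, ihB ρ]
  | impl A B _ ihB =>
      intro ρ
      unfold Form.val
      split_ifs
      exacts [hone, ihB ρ]
  | delta A _ =>
      intro ρ
      unfold Form.val
      split_ifs
      exacts [hone, hzero]
  | all A ih =>
      exact fun ρ => sInf_mem_insert_zero_Ici hc.1.le ⟨_, d, rfl⟩
        (by rintro _ ⟨_, rfl⟩; exact ih _)
  | ex A ih =>
      exact fun ρ => sSup_mem_insert_zero_Ici ⟨_, d, rfl⟩
        (by rintro _ ⟨_, rfl⟩; exact ih _)

/-- If `c ∈ (0,1]` and `I` is a `V`-interpretation (of the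
Δ-extended language) in which every atomic sentence with parameters takes
value 0 or value ≥ c, then every formula (with parameters given by an
assignment of its free variables) takes value 0 or value ≥ c. -/
theorem stmt_18 {L : Lang} {V : Set ℝ} (hV : GodelSet V) (c : ℝ)
    (hc : c ∈ Set.Ioc (0:ℝ) 1) (I : Interp L V)
    (hatoms : ∀ {k : ℕ} (R : L.Rel k) (v : Fin k → I.Dom),
      I.relVal R v = 0 ∨ c ≤ I.relVal R v) :
    ∀ {n : ℕ} (A : Form L n) (ρ : Fin n → I.Dom),
      Form.val I A ρ = 0 ∨ c ≤ Form.val I A ρ :=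
  stmt_18_general c hc I hatoms

end GodelPaper
end
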